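/- arXiv:1603.06444 — 5 statements merged into one kernel-verified Lean document; each statement's English description precedes it below -/
import Mathlib

section
/- For every integer t ≥ 3, the polynomial t·x is a Hilbert polynomial. -/
open Polynomial

/-- A polynomial `f ∈ ℚ[x]` is a *Hilbert polynomial* if there exist a field `k`,
a standard graded `k`-algebra `R` (a commutative `ℕ`-graded `k`-algebra with
finite-dimensional graded pieces, generated as a `k`-algebra by its degree-one part)
and an `N₀` such that `dim_k R_i = f(i)` for all `i ≥ N₀`. -/
def IsHilbertPolynomial (f : Polynomial ℚ) : Prop :=
  ∃ (k : Type) (R : Type) (_ : Field k) (_ : CommRing R) (_ : Algebra k R)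
    (𝒜 : ℕ → Submodule k R) (_ : GradedAlgebra 𝒜),
    (∀ i : ℕ, FiniteDimensional k (𝒜 i)) ∧
    Algebra.adjoin k ((𝒜 1 : Submodule k R) : Set R) = ⊤ ∧
    ∃ N₀ : ℕ, ∀ i : ℕ, N₀ ≤ i → (Module.finrank k (𝒜 i) : ℚ) = f.eval (i : ℚ)

/-!
The Hilbert function `T i` is realized by the semigroup ring of the monoid
`gappedCone T = {(a, b) ∈ ℕ² | b ≤ T a, b ≠ T a - 1}`, graded by `a`. Its degree-`a` piece has
the basis `(a, b)` with `b ∈ [0, T a] \ {T a - 1}`, hence dimension `T a` for `a ≥ 1`. For `T ≥ 3` every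
element of degree `n + 1` splits off an element of degree one, so the algebra is generated in
degree one.
-/

namespace AddMonoidAlgebra

section Grading

variable {R M ι : Type*} [CommSemiring R]

theorem gradeBy_eq_supported (deg : M → ι) (i : ι) :
    gradeBy R deg i = supported R R (deg ⁻¹' {i}) := by
  ext a
  rw [mem_gradeBy_iff, mem_supported]

noncomputable def gradeByEquivFinsupp (deg : M → ι) (i : ι) :
    gradeBy R deg i ≃ₗ[R] (deg ⁻¹' {i} →₀ R) :=
  (LinearEquiv.ofEq _ _ (gradeBy_eq_supported deg i)).trans (supportedEquivFinsupp _)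

theorem adjoin_gradeBy_one_eq_top [AddCommMonoid M] (deg : M → ℕ)
    (h : AddSubmonoid.closure (deg ⁻¹' {1}) = ⊤) :
    Algebra.adjoin R (gradeBy R deg 1 : Set (AddMonoidAlgebra R M)) = ⊤ := by
  have hsurj := mvPolynomial_aeval_of_surjective_of_closure (R := R) h
  rw [← AlgHom.range_eq_top, ← Algebra.adjoin_range_eq_range_aeval] at hsurj
  refine eq_top_iff.2 (hsurj.symm.le.trans (Algebra.adjoin_mono ?_))
  rintro _ ⟨⟨m, hm : deg m = 1⟩, rfl⟩
  have := single_mem_gradeBy (R := R) deg m 1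
  rwa [hm] at this

end Grading

section Field

variable {k M ι : Type*} [Field k] (deg : M → ι) (i : ι) [Finite (deg ⁻¹' {i})]

instance finiteDimensional_gradeBy : FiniteDimensional k (gradeBy k deg i) :=
  Module.Finite.equiv (gradeByEquivFinsupp deg i).symm

theorem finrank_gradeBy : Module.finrank k (gradeBy k deg i) = Nat.card (deg ⁻¹' {i}) := by
  have := Fintype.ofFinite (deg ⁻¹' {i})
  rw [(gradeByEquivFinsupp deg i).finrank_eq, Module.finrank_finsupp_self,
    Nat.card_eq_fintype_card]

end Field

end AddMonoidAlgebra

theorem isHilbertPolynomial_of_addMonoidAlgebra {M : Type} [AddCommMonoid M] (deg : M →+ ℕ)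
    [∀ i, Finite (deg ⁻¹' {i})] (hgen : AddSubmonoid.closure (deg ⁻¹' {1}) = ⊤) {f : ℚ[X]}
    (N₀ : ℕ) (hf : ∀ i, N₀ ≤ i → (Nat.card (deg ⁻¹' {i}) : ℚ) = f.eval (i : ℚ)) :
    IsHilbertPolynomial f :=
  ⟨ℚ, AddMonoidAlgebra ℚ M, inferInstance, inferInstance, inferInstance,
    AddMonoidAlgebra.gradeBy ℚ deg, AddMonoidAlgebra.gradeBy.gradedAlgebra deg,
    fun _ => inferInstance, AddMonoidAlgebra.adjoin_gradeBy_one_eq_top deg hgen, N₀,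
    fun i hi => by rw [AddMonoidAlgebra.finrank_gradeBy, hf i hi]⟩

theorem Nat.card_subtype_le_and_add_one_ne {n : ℕ} (hn : 0 < n) :
    Nat.card {b : ℕ // b ≤ n ∧ b + 1 ≠ n} = n := by
  have : {b : ℕ | b ≤ n ∧ b + 1 ≠ n} = ↑((Finset.range (n + 1)).erase (n - 1)) := by
    ext b
    simp only [Set.mem_ofPred_eq, Finset.coe_erase, Finset.coe_range, Set.mem_sdiff,
      Set.mem_Iio, Set.mem_singleton_iff]
    omega
  rw [← Set.coe_ofPred, this, Nat.card_coe_set_eq, Set.ncard_coe_finset,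
    Finset.card_erase_of_mem (by simp), Finset.card_range, Nat.add_sub_cancel]

def gappedCone (T : ℕ) : AddSubmonoid (ℕ × ℕ) where
  carrier := {p | p.2 ≤ T * p.1 ∧ p.2 + 1 ≠ T * p.1}
  zero_mem' := by simp
  add_mem' := by
    rintro ⟨a, b⟩ ⟨c, d⟩ ⟨hab, hab'⟩ ⟨hcd, hcd'⟩
    simp only [Set.mem_ofPred_eq, Prod.mk_add_mk, mul_add] at *
    omega

namespace gappedCone

variable {T : ℕ}

theorem mem_iff {a b : ℕ} : (a, b) ∈ gappedCone T ↔ b ≤ T * a ∧ b + 1 ≠ T * a := Iff.rfl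

variable (T) in
def deg : gappedCone T →+ ℕ := (AddMonoidHom.fst ℕ ℕ).comp (gappedCone T).subtype

variable (T) in
def degFiberEquiv (i : ℕ) : deg T ⁻¹' {i} ≃ {b : ℕ // b ≤ T * i ∧ b + 1 ≠ T * i} where
  toFun m := ⟨m.1.1.2, by obtain ⟨⟨⟨a, b⟩, hab⟩, rfl : a = i⟩ := m; exact hab⟩
  invFun b := ⟨⟨(i, b.1), b.2⟩, rfl⟩
  left_inv := by rintro ⟨⟨⟨a, b⟩, hab⟩, rfl : a = i⟩; rfl
  right_inv _ := rfl

instance (i : ℕ) : Finite (deg T ⁻¹' {i}) :=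
  have : Finite {b : ℕ // b ≤ T * i ∧ b + 1 ≠ T * i} :=
    ((Set.finite_Iic (T * i)).subset fun _ hb => hb.1).to_subtype
  .of_equiv _ (degFiberEquiv T i).symm

theorem card_deg_fiber {i : ℕ} (hT : 0 < T) (hi : 0 < i) :
    Nat.card (deg T ⁻¹' {i}) = T * i := by
  rw [Nat.card_congr (degFiberEquiv T i), Nat.card_subtype_le_and_add_one_ne (Nat.mul_pos hT hi)]

theorem exists_add_eq_of_mem (hT : 3 ≤ T) {n j : ℕ} (h : (n + 1, j) ∈ gappedCone T) :
    ∃ g r, (1, g) ∈ gappedCone T ∧ (n, r) ∈ gappedCone T ∧ g + r = j := by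
  simp only [mem_iff, mul_add, mul_one] at *
  have hTn : T * n = 0 ∨ 3 ≤ T * n := by
    rcases n.eq_zero_or_pos with rfl | hn
    · simp
    · exact .inr (hT.trans (Nat.le_mul_of_pos_right T hn))
  by_cases h1 : T * n ≤ j
  · by_cases h2 : j = T * n + T
    · exact ⟨T, T * n, by omega⟩
    · exact ⟨j - T * n, T * n, by omega⟩
  · by_cases h3 : j + 1 = T * n
    -- the split `1 + (j - 1)` needs `(1, 1) ∈ gappedCone T`, i.e. `T ≠ 2`
    · exact ⟨1, j - 1, by omega⟩
    · exact ⟨0, j, by omega⟩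

theorem closure_deg_preimage_one (hT : 3 ≤ T) :
    AddSubmonoid.closure (deg T ⁻¹' {1}) = ⊤ := by
  refine eq_top_iff.2 fun ⟨⟨n, j⟩, hm⟩ _ => ?_
  induction n generalizing j with
  | zero =>
    obtain rfl : j = 0 := by rw [mem_iff] at hm; omega
    exact zero_mem _
  | succ n ih =>
    obtain ⟨g, r, hg, hr, rfl⟩ := exists_add_eq_of_mem hT hm
    have : (⟨(n + 1, g + r), hm⟩ : gappedCone T) = ⟨(1, g), hg⟩ + ⟨(n, r), hr⟩ := by
      ext <;> simp [add_comm]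
    rw [this]
    exact add_mem (AddSubmonoid.subset_closure rfl) (ih r hr trivial)

end gappedCone

theorem sign_patterns_stmt4 (t : ℤ) (ht : 3 ≤ t) :
    IsHilbertPolynomial (Polynomial.C (t : ℚ) * Polynomial.X) := by
  obtain ⟨T, rfl⟩ := Int.eq_ofNat_of_zero_le (by omega : 0 ≤ t)
  have hT : 3 ≤ T := by omega
  refine isHilbertPolynomial_of_addMonoidAlgebra (gappedCone.deg T)
    (gappedCone.closure_deg_preimage_one hT) 1 fun i hi => ?_
  rw [gappedCone.card_deg_fiber (by omega) hi]
  simp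
end

section
/- The polynomial 2·x is not a Hilbert polynomial. -/
/-!
Extend scalars to an infinite field. Let `S` be the intersection of the primary components
of `0` whose radicals do not contain `R₁`, and pick `ℓ ∈ R₁` outside all of their radicals:
then `ℓ` is a nonzerodivisor modulo `S`, while `S ∩ R_n = 0` for large `n` because the
remaining components contain a power of `R₁`. The Hilbert function `h` of `R / (S + ℓR)` satisfies
`dim R_n = dim (S ∩ R_n) + h 0 + ⋯ + h n`, so `h n = 2` for large `n`. By the degree-one case of
Macaulay's bound, `h j ≤ 1` would force `h (s j) ≤ 1` for all `s`; hence `h j ≥ 2` for every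
`j ≥ 1`, and `dim R_n ≥ 2n + 1` for every `n`.
-/

open Polynomial

open Module Submodule Filter TensorProduct

namespace Submodule

variable {K V : Type*} [Field K] [AddCommGroup V] [Module K V]

theorem exists_mem_forall_notMem_of_forall_not_le [Infinite K] {ι : Type*} [Finite ι]
    (W : Submodule K V) (B : ι → Submodule K V) (h : ∀ i, ¬ W ≤ B i) :
    ∃ x ∈ W, ∀ i, x ∉ B i := by
  obtain ⟨x, hx⟩ := exists_forall_notMem_of_forall_ne_top (fun i ↦ (B i).comap W.subtype)
    fun i hi ↦ h i (comap_subtype_eq_top.mp hi)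
  exact ⟨x, x.2, hx⟩

theorem finrank_map_add_finrank_ker_inf {V₂ : Type*} [AddCommGroup V₂] [Module K V₂]
    (f : V →ₗ[K] V₂) (p : Submodule K V) [FiniteDimensional K p] :
    finrank K (p.map f) + finrank K ↥(LinearMap.ker f ⊓ p) = finrank K p := by
  have hker : LinearMap.ker (f ∘ₗ p.subtype) = (LinearMap.ker f ⊓ p).comap p.subtype := by
    rw [LinearMap.ker_comp, comap_inf, comap_subtype_self, inf_top_eq]
  rw [← (LinearMap.finrank_range_add_finrank_ker (f ∘ₗ p.subtype)), LinearMap.range_comp,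
    range_subtype, hker, (comapSubtypeEquivOfLe inf_le_right).finrank_eq]

theorem finrank_le_finrank_add_one_iff {X Y : Submodule K V} [FiniteDimensional K Y]
    (hXY : X ≤ Y) : finrank K Y ≤ finrank K X + 1 ↔ ∃ v ∈ Y, Y ≤ X ⊔ span K {v} := by
  have : FiniteDimensional K X := finiteDimensional_of_le hXY
  constructor
  · intro h
    by_cases hYX : Y ≤ X
    · exact ⟨0, Y.zero_mem, hYX.trans le_sup_left⟩
    obtain ⟨v, hvY, hvX⟩ := SetLike.not_le_iff_exists.mp hYX
    have hle : X ⊔ span K {v} ≤ Y := sup_le hXY ((span_singleton_le_iff_mem v Y).mpr hvY)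
    have : FiniteDimensional K ↥(X ⊔ span K {v}) := finiteDimensional_of_le hle
    have hlt : finrank K X < finrank K ↥(X ⊔ span K {v}) :=
      finrank_lt_finrank_of_lt (left_lt_sup.mpr fun h ↦ hvX (h (mem_span_singleton_self v)))
    exact ⟨v, hvY, (eq_of_le_of_finrank_le hle (by omega)).ge⟩
  · rintro ⟨v, -, hY⟩
    calc finrank K Y ≤ finrank K ↥(X ⊔ span K {v}) := finrank_mono hY
      _ ≤ finrank K X + finrank K (span K {v}) := finrank_add_le_finrank_add_finrank X _
      _ ≤ finrank K X + 1 := by gcongr; simpa using finrank_span_le_card ({v} : Set V)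

end Submodule

theorem Submodule.iSup_pow_eq_top_of_adjoin_eq_top {K R : Type*} [CommSemiring K] [Semiring R]
    [Algebra K R] {M : Submodule K R} (h : Algebra.adjoin K (M : Set R) = ⊤) :
    ⨆ n, M ^ n = ⊤ := by
  rw [eq_top_iff, ← Algebra.toSubmodule_eq_top.mpr h, Algebra.adjoin_eq_span, span_le]
  intro x hx
  induction hx using Submonoid.closure_induction with
  | mem x hx => exact mem_iSup_of_mem 1 (by rwa [pow_one])
  | one => exact mem_iSup_of_mem 0 (by simp [one_eq_span])
  | mul x y _ _ hx hy =>
    refine (?_ : (⨆ i, M ^ i) * (⨆ j, M ^ j) ≤ ⨆ k, M ^ k) (mul_mem_mul hx hy)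
    simp only [iSup_mul, mul_iSup, ← pow_add]
    exact iSup₂_le fun i j ↦ le_iSup (M ^ ·) (j + i)

theorem Submodule.adjoin_baseChange_eq_top {k K R : Type*} [CommSemiring k] [CommSemiring K]
    [Algebra k K] [Semiring R] [Algebra k R] {p : Submodule k R}
    (h : Algebra.adjoin k (p : Set R) = ⊤) :
    Algebra.adjoin K (p.baseChange K : Set (K ⊗[k] R)) = ⊤ := by
  rw [eq_top_iff, ← Algebra.TensorProduct.adjoin_one_tmul_image_eq_top _ h]
  refine Algebra.adjoin_mono ?_
  rintro - ⟨x, hx, rfl⟩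
  exact tmul_mem_baseChange_of_mem 1 hx

theorem Algebra.FiniteType.of_adjoin_submodule_eq_top {K R : Type*} [CommSemiring K]
    [CommSemiring R] [Algebra K R] {M : Submodule K R} [Module.Finite K M]
    (h : Algebra.adjoin K (M : Set R) = ⊤) : Algebra.FiniteType K R := by
  obtain ⟨s, hs⟩ := (Module.Finite.iff_fg (N := M)).mp inferInstance
  exact ⟨⟨s, by rw [← Algebra.adjoin_span, hs, h]⟩⟩

theorem Ideal.mem_finsetInf_of_mul_mem {R : Type*} [CommSemiring R] {t : Finset (Ideal R)}
    (ht : ∀ Q ∈ t, Q.IsPrimary) {a b : R} (ha : ∀ Q ∈ t, a ∉ Q.radical)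
    (hab : a * b ∈ t.inf id) : b ∈ t.inf id := by
  rw [mem_finsetInf] at hab ⊢
  exact fun Q hQ ↦
    ((Ideal.isPrimary_iff.mp (ht Q hQ)).2 (mul_comm a b ▸ hab Q hQ)).resolve_right (ha Q hQ)

namespace DirectSum

variable {k K R : Type*} [Field k] [Field K] [Algebra k K] [AddCommGroup R] [Module k R]
  {ι : Type*} [DecidableEq ι] (ℳ : ι → Submodule k R) [Decomposition ℳ]

theorem finrank_baseChange (i : ι) : finrank K ((ℳ i).baseChange K) = finrank k (ℳ i) :=
  (LinearEquiv.ofBijective _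
    ((Decomposition.isInternal ℳ).toBaseChange_bijective ℳ i)).finrank_eq.symm.trans
    Module.finrank_baseChange

theorem finiteDimensional_baseChange (i : ι) [FiniteDimensional k (ℳ i)] :
    FiniteDimensional K ((ℳ i).baseChange K) :=
  (LinearEquiv.ofBijective _
    ((Decomposition.isInternal ℳ).toBaseChange_bijective ℳ i)).finiteDimensional

end DirectSum

namespace GradedAlgebra

section Semiring

variable {K R : Type*} [CommSemiring K] [CommSemiring R] [Algebra K R]
  {𝒜 : ℕ → Submodule K R} [GradedAlgebra 𝒜]

theorem pow_grade_one_le (n : ℕ) : 𝒜 1 ^ n ≤ 𝒜 n := by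
  induction n with
  | zero =>
    rw [pow_zero, one_eq_span, span_le, Set.singleton_subset_iff]
    exact SetLike.one_mem_graded 𝒜
  | succ n ih =>
    rw [pow_succ, mul_le]
    exact fun x hx y hy ↦ SetLike.mul_mem_graded (ih hx) hy

theorem pow_grade_one_eq (h : Algebra.adjoin K (𝒜 1 : Set R) = ⊤) (n : ℕ) :
    𝒜 1 ^ n = 𝒜 n := by
  refine pow_grade_one_le n |>.antisymm fun x hx ↦ ?_
  have hproj : ∀ j, (𝒜 1 ^ j).map (proj 𝒜 n) ≤ 𝒜 1 ^ n := by
    rintro j - ⟨y, hy, rfl⟩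
    obtain rfl | hjn := eq_or_ne j n
    · rwa [proj_apply, DirectSum.decompose_of_mem_same 𝒜 (pow_grade_one_le j hy)]
    · rw [proj_apply, DirectSum.decompose_of_mem_ne 𝒜 (pow_grade_one_le j hy) hjn]
      exact zero_mem _
  have hx' : proj 𝒜 n x ∈ (⨆ j, 𝒜 1 ^ j).map (proj 𝒜 n) :=
    mem_map_of_mem (by simp [iSup_pow_eq_top_of_adjoin_eq_top h])
  rw [Submodule.map_iSup] at hx'
  rw [← DirectSum.decompose_of_mem_same 𝒜 hx, ← proj_apply]
  exact iSup_le hproj hx'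

theorem grade_mul_grade_eq (h : Algebra.adjoin K (𝒜 1 : Set R) = ⊤) (m n : ℕ) :
    𝒜 m * 𝒜 n = 𝒜 (m + n) := by
  rw [← pow_grade_one_eq h m, ← pow_grade_one_eq h n, ← pow_grade_one_eq h (m + n), pow_add]

theorem grade_zero_eq (h : Algebra.adjoin K (𝒜 1 : Set R) = ⊤) : 𝒜 0 = span K {1} := by
  rw [← pow_grade_one_eq h, pow_zero, one_eq_span]

theorem eventually_grade_le_of_le_radical [IsNoetherianRing R]
    (h : Algebra.adjoin K (𝒜 1 : Set R) = ⊤) {Q : Ideal R}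
    (hQ : 𝒜 1 ≤ Q.radical.restrictScalars K) : ∀ᶠ n in atTop, 𝒜 n ≤ Q.restrictScalars K := by
  obtain ⟨m, hm⟩ := Q.exists_radical_pow_le_of_fg (IsNoetherian.noetherian _)
  filter_upwards [eventually_ge_atTop (max m 1)] with n hn
  calc 𝒜 n = 𝒜 1 ^ n := (pow_grade_one_eq h n).symm
    _ ≤ Q.radical.restrictScalars K ^ n := pow_le_pow_left' hQ n
    _ = (Q.radical ^ n).restrictScalars K := (restrictScalars_pow (by omega)).symm
    _ ≤ Q.restrictScalars K := fun x hx ↦ hm (Ideal.pow_le_pow_right (by omega : m ≤ n) hx)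

theorem grade_le_sup_span_pow (h : Algebra.adjoin K (𝒜 1 : Set R) = ⊤)
    {J : ℕ → Submodule K R} (hJ : ∀ a c, J a * 𝒜 c ≤ J (a + c))
    {j : ℕ} {v : R} (hv : v ∈ 𝒜 j) (hj : 𝒜 j ≤ J j ⊔ span K {v}) (s : ℕ) :
    𝒜 (s * j) ≤ J (s * j) ⊔ span K {v ^ s} := by
  induction s with
  | zero => rw [zero_mul, grade_zero_eq h, pow_zero]; exact le_sup_right
  | succ s ih =>
    have hJj : 𝒜 (s * j) * J j ≤ J ((s + 1) * j) := by
      rw [mul_comm, Nat.succ_mul, add_comm]; exact hJ _ _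
    have hJs : J (s * j) * span K {v} ≤ J ((s + 1) * j) :=
      (_root_.mul_le_mul_right ((span_singleton_le_iff_mem _ _).mpr hv) _).trans
        (by rw [Nat.succ_mul]; exact hJ _ _)
    calc 𝒜 ((s + 1) * j) = 𝒜 (s * j) * 𝒜 j := by rw [grade_mul_grade_eq h, Nat.succ_mul]
      _ ≤ 𝒜 (s * j) * (J j ⊔ span K {v}) := _root_.mul_le_mul_right hj _
      _ ≤ 𝒜 (s * j) * J j ⊔ (J (s * j) ⊔ span K {v ^ s}) * span K {v} := by
        rw [Submodule.mul_sup]; exact sup_le_sup_left (_root_.mul_le_mul_left ih _) _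
      _ = 𝒜 (s * j) * J j ⊔ (J (s * j) * span K {v} ⊔ span K {v ^ (s + 1)}) := by
        rw [Submodule.sup_mul, span_mul_span, Set.singleton_mul_singleton, pow_succ]
      _ ≤ J ((s + 1) * j) ⊔ span K {v ^ (s + 1)} :=
        sup_le (le_sup_of_le_left hJj) (sup_le_sup_right hJs _)

end Semiring

section Field

variable {K R : Type*} [Field K] [CommRing R] [Algebra K R] {𝒜 : ℕ → Submodule K R}
  [GradedAlgebra 𝒜]

theorem exists_saturation_of_adjoin_eq_top [Infinite K] [IsNoetherianRing R]
    (h : Algebra.adjoin K (𝒜 1 : Set R) = ⊤) :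
    ∃ S : Ideal R, ∃ ℓ ∈ 𝒜 1, (∀ v, ℓ * v ∈ S → v ∈ S) ∧
      ∀ᶠ n in atTop, S.restrictScalars K ⊓ 𝒜 n = ⊥ := by
  classical
  obtain ⟨t, ht_inf, ht_primary⟩ :
      ∃ t : Finset (Ideal R), t.inf id = ⊥ ∧ ∀ Q ∈ t, Q.IsPrimary := Submodule.isLasker R R ⊥
  let t' := t.filter fun Q ↦ ¬ 𝒜 1 ≤ Q.radical.restrictScalars K
  obtain ⟨ℓ, hℓ, hℓt'⟩ := exists_mem_forall_notMem_of_forall_not_le (𝒜 1)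
    (fun Q : t' ↦ (Q : Ideal R).radical.restrictScalars K) fun Q ↦ (Finset.mem_filter.mp Q.2).2
  refine ⟨t'.inf id, ℓ, hℓ, fun v ↦ Ideal.mem_finsetInf_of_mul_mem
    (fun Q hQ ↦ ht_primary Q (Finset.mem_filter.mp hQ).1) fun Q hQ ↦ hℓt' ⟨Q, hQ⟩, ?_⟩
  have : ∀ᶠ n in atTop, ∀ Q ∈ t, 𝒜 1 ≤ Q.radical.restrictScalars K →
      𝒜 n ≤ Q.restrictScalars K := by
    refine (eventually_all_finset t).mpr fun Q _ ↦ ?_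
    by_cases hQ : 𝒜 1 ≤ Q.radical.restrictScalars K
    · exact (eventually_grade_le_of_le_radical h hQ).mono fun _ hn _ ↦ hn
    · exact .of_forall fun _ hQ' ↦ absurd hQ' hQ
  filter_upwards [this] with n hn
  refine eq_bot_iff.mpr fun x ⟨hxS, hxn⟩ ↦ ?_
  have hx : x ∈ t.inf id := mem_finsetInf.mpr fun Q hQ ↦ by
    by_cases hQ' : 𝒜 1 ≤ Q.radical.restrictScalars K
    · exact hn Q hQ hQ' hxn
    · exact Finset.inf_le (f := id) (Finset.mem_filter.mpr ⟨hQ, hQ'⟩) hxS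
  simpa [ht_inf] using hx

theorem finrank_grade_mul_le_finrank_add_one [∀ n, FiniteDimensional K (𝒜 n)]
    (h : Algebra.adjoin K (𝒜 1 : Set R) = ⊤) {J : ℕ → Submodule K R}
    (hJ : ∀ a c, J a * 𝒜 c ≤ J (a + c)) (hJ𝒜 : ∀ n, J n ≤ 𝒜 n) {j : ℕ}
    (hj : finrank K (𝒜 j) ≤ finrank K (J j) + 1) (s : ℕ) :
    finrank K (𝒜 (s * j)) ≤ finrank K (J (s * j)) + 1 := by
  obtain ⟨v, hv, hle⟩ := (finrank_le_finrank_add_one_iff (hJ𝒜 j)).mp hj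
  exact (finrank_le_finrank_add_one_iff (hJ𝒜 _)).mpr
    ⟨v ^ s, SetLike.pow_mem_graded s hv, grade_le_sup_span_pow h hJ hv hle s⟩

theorem finrank_add_two_le_of_eventually [∀ n, FiniteDimensional K (𝒜 n)]
    (h : Algebra.adjoin K (𝒜 1 : Set R) = ⊤) {J : ℕ → Submodule K R}
    (hJ : ∀ a c, J a * 𝒜 c ≤ J (a + c)) (hJ𝒜 : ∀ n, J n ≤ 𝒜 n)
    (hev : ∀ᶠ n in atTop, finrank K (J n) + 2 ≤ finrank K (𝒜 n)) {j : ℕ} (hj : 0 < j) :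
    finrank K (J j) + 2 ≤ finrank K (𝒜 j) := by
  by_contra hlt
  obtain ⟨N, hN⟩ := eventually_atTop.mp hev
  have := finrank_grade_mul_le_finrank_add_one h hJ hJ𝒜 (by omega : _ ≤ finrank K (J j) + 1) N
  have := hN (N * j) (Nat.le_mul_of_pos_right N hj)
  omega

end Field

section HyperplaneSection

variable {K R : Type*} [Field K] [CommRing R] [Algebra K R] (𝒜 : ℕ → Submodule K R)
  (S : Ideal R) (ℓ : R)

/-- `S ∩ R_n + ℓ R_{n-1}`: it stands in for the degree-`n` part of `S + ℓR`, which is not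
available directly because `S` need not be homogeneous. -/
def hyperplaneSection : ℕ → Submodule K R
  | 0 => S.restrictScalars K ⊓ 𝒜 0
  | n + 1 => S.restrictScalars K ⊓ 𝒜 (n + 1) ⊔ (𝒜 n).map (LinearMap.mulLeft K ℓ)

variable {𝒜 S ℓ}

theorem inf_grade_le_hyperplaneSection (n : ℕ) :
    S.restrictScalars K ⊓ 𝒜 n ≤ hyperplaneSection 𝒜 S ℓ n := by
  cases n with
  | zero => exact le_rfl
  | succ n => exact le_sup_left

variable [GradedAlgebra 𝒜]

theorem inf_grade_mul_le (a c : ℕ) :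
    (S.restrictScalars K ⊓ 𝒜 a) * 𝒜 c ≤ S.restrictScalars K ⊓ 𝒜 (a + c) :=
  mul_le.mpr fun _ hx _ hy ↦ ⟨S.mul_mem_right _ hx.1, SetLike.mul_mem_graded hx.2 hy⟩

theorem map_mulLeft_grade_le (hℓ : ℓ ∈ 𝒜 1) (n : ℕ) :
    (𝒜 n).map (LinearMap.mulLeft K ℓ) ≤ 𝒜 (n + 1) := by
  rintro - ⟨x, hx, rfl⟩
  rw [add_comm]
  exact SetLike.mul_mem_graded hℓ hx

theorem hyperplaneSection_le (hℓ : ℓ ∈ 𝒜 1) (n : ℕ) : hyperplaneSection 𝒜 S ℓ n ≤ 𝒜 n := by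
  cases n with
  | zero => exact inf_le_right
  | succ n => exact sup_le inf_le_right (map_mulLeft_grade_le hℓ n)

theorem hyperplaneSection_mul_le (a c : ℕ) :
    hyperplaneSection 𝒜 S ℓ a * 𝒜 c ≤ hyperplaneSection 𝒜 S ℓ (a + c) := by
  cases a with
  | zero => exact (inf_grade_mul_le 0 c).trans (inf_grade_le_hyperplaneSection _)
  | succ m =>
    rw [hyperplaneSection, Submodule.sup_mul, Nat.add_right_comm, hyperplaneSection]
    refine sup_le_sup ((inf_grade_mul_le _ c).trans ?_) ?_
    · rw [Nat.add_right_comm]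
    · refine mul_le.mpr fun _ ⟨x, hx, hxz⟩ y hy ↦ ⟨x * y, SetLike.mul_mem_graded hx hy, ?_⟩
      rw [← hxz, LinearMap.mulLeft_apply, LinearMap.mulLeft_apply, mul_assoc]

theorem finrank_hyperplaneSection_succ_add [∀ n, FiniteDimensional K (𝒜 n)] (hℓ : ℓ ∈ 𝒜 1)
    (hreg : ∀ v, ℓ * v ∈ S → v ∈ S) (n : ℕ) :
    finrank K (hyperplaneSection 𝒜 S ℓ (n + 1)) + finrank K ↥(S.restrictScalars K ⊓ 𝒜 n) =
      finrank K ↥(S.restrictScalars K ⊓ 𝒜 (n + 1)) + finrank K (𝒜 n) := by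
  rw [hyperplaneSection]
  set μ := LinearMap.mulLeft K ℓ
  have hinter : S.restrictScalars K ⊓ 𝒜 (n + 1) ⊓ (𝒜 n).map μ =
      (S.restrictScalars K ⊓ 𝒜 n).map μ := by
    refine le_antisymm ?_ (le_inf ?_ (map_mono inf_le_right))
    · rintro - ⟨⟨hS, -⟩, x, hx, rfl⟩
      exact ⟨x, ⟨hreg x hS, hx⟩, rfl⟩
    · rintro - ⟨x, hx, rfl⟩
      exact ⟨S.mul_mem_left ℓ hx.1, map_mulLeft_grade_le hℓ n ⟨x, hx.2, rfl⟩⟩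
  have hker : LinearMap.ker μ ⊓ (S.restrictScalars K ⊓ 𝒜 n) = LinearMap.ker μ ⊓ 𝒜 n := by
    refine le_antisymm (inf_le_inf_left _ inf_le_right) fun x ⟨hx0, hx⟩ ↦ ⟨hx0, ?_, hx⟩
    refine hreg x ?_
    rw [← LinearMap.mulLeft_apply (R := K), LinearMap.mem_ker.mp hx0]
    exact S.zero_mem
  have h1 := finrank_sup_add_finrank_inf_eq (S.restrictScalars K ⊓ 𝒜 (n + 1)) ((𝒜 n).map μ)
  have h2 := finrank_map_add_finrank_ker_inf μ (𝒜 n)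
  have h3 := finrank_map_add_finrank_ker_inf μ (S.restrictScalars K ⊓ 𝒜 n)
  rw [hinter] at h1
  rw [hker] at h3
  omega

theorem finrank_inf_add_two_mul_lt [∀ n, FiniteDimensional K (𝒜 n)] (hℓ : ℓ ∈ 𝒜 1)
    (hreg : ∀ v, ℓ * v ∈ S → v ∈ S) (hS : (1 : R) ∉ S)
    (hcodim : ∀ j, 0 < j → finrank K (hyperplaneSection 𝒜 S ℓ j) + 2 ≤ finrank K (𝒜 j))
    (n : ℕ) : finrank K ↥(S.restrictScalars K ⊓ 𝒜 n) + 2 * n < finrank K (𝒜 n) := by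
  induction n with
  | zero =>
    exact finrank_lt_finrank_of_lt <| SetLike.lt_iff_le_and_exists.mpr
      ⟨inf_le_right, 1, SetLike.one_mem_graded 𝒜, fun h ↦ hS h.1⟩
  | succ n ih =>
    have := finrank_hyperplaneSection_succ_add hℓ hreg n
    have := hcodim (n + 1) n.succ_pos
    omega

end HyperplaneSection

theorem not_eventually_finrank_eq_two_mul {K R : Type*} [Field K] [Infinite K] [CommRing R]
    [Algebra K R] {𝒜 : ℕ → Submodule K R} [GradedAlgebra 𝒜] [∀ n, FiniteDimensional K (𝒜 n)]
    (h : Algebra.adjoin K (𝒜 1 : Set R) = ⊤) : ¬ ∀ᶠ n in atTop, finrank K (𝒜 n) = 2 * n := by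
  intro hdim
  have := Algebra.FiniteType.of_adjoin_submodule_eq_top h
  have := Algebra.FiniteType.isNoetherianRing K R
  obtain ⟨S, ℓ, hℓ, hreg, hsat⟩ := exists_saturation_of_adjoin_eq_top h
  have hS : (1 : R) ∉ S := fun h1 ↦ by
    obtain ⟨n, hn, hn0, hn1⟩ := (hdim.and (hsat.and (eventually_ge_atTop 1))).exists
    rw [(Ideal.eq_top_iff_one S).mpr h1, restrictScalars_top, top_inf_eq] at hn0
    rw [hn0, finrank_bot] at hn
    omega
  have hgap : ∀ᶠ n in atTop,
      finrank K (hyperplaneSection 𝒜 S ℓ n) + 2 ≤ finrank K (𝒜 n) := by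
    obtain ⟨N, hN⟩ := eventually_atTop.mp (hdim.and hsat)
    refine eventually_atTop.mpr ⟨N + 1, fun n hn ↦ ?_⟩
    obtain ⟨m, rfl⟩ : ∃ m, n = m + 1 := ⟨n - 1, by omega⟩
    have := finrank_hyperplaneSection_succ_add hℓ hreg m
    rw [(hN m (by omega)).2, (hN (m + 1) (by omega)).2, finrank_bot] at this
    have := (hN m (by omega)).1
    have := (hN (m + 1) (by omega)).1
    omega
  obtain ⟨n, hn⟩ := hdim.exists
  have := finrank_inf_add_two_mul_lt hℓ hreg hS (fun j ↦ finrank_add_two_le_of_eventually h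
    hyperplaneSection_mul_le (hyperplaneSection_le hℓ) hgap) n
  omega

end GradedAlgebra

theorem sign_patterns_stmt6 :
    ¬ IsHilbertPolynomial (Polynomial.C (2 : ℚ) * Polynomial.X) := by
  rintro ⟨k, R, _, _, _, 𝒜, _, _, h, N₀, hval⟩
  let K := AlgebraicClosure k
  have := fun i ↦ DirectSum.finiteDimensional_baseChange (K := K) 𝒜 i
  refine GradedAlgebra.not_eventually_finrank_eq_two_mul (𝒜 := fun i ↦ (𝒜 i).baseChange K)
    (adjoin_baseChange_eq_top h) ?_
  filter_upwards [eventually_ge_atTop N₀] with n hn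
  rw [DirectSum.finrank_baseChange]
  exact_mod_cast (hval n hn).trans (by simp : eval (n : ℚ) (C 2 * X) = ((2 * n : ℕ) : ℚ))
end

section
/- Let f(x) ∈ ℚ[x] be a polynomial of degree d such that f(n) ∈ ℤ for all n ∈ ℤ. Then there exist unique integers m_0, m_1, …, m_d such that f(x) = Σ_{i=0}^{d} ( binom(x+i, i+1) − binom(x+i−m_i, i+1) ), where binom(y, j) denotes the binomial coefficient polynomial y(y−1)⋯(y−j+1)/j!. -/
open Polynomial

/-- The binomial coefficient polynomial `binom(y, j) = y(y-1)⋯(y-j+1)/j!` in `ℚ[x]`. -/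
noncomputable def binomPoly (j : ℕ) : Polynomial ℚ :=
  Polynomial.C ((j.factorial : ℚ)⁻¹) * descPochhammer ℚ j

/-! The polynomial `binom(x+i, i+1) - binom(x+i-m, i+1)` is integer-valued, of degree at most `i`,
with coefficient `m / i!` at `x^i`. Conversely, if `g` is integer-valued of degree at most `e`, its
`e`-th forward difference is the constant `e! · coeff_e g`, so `e! · coeff_e g` is an integer `m`;
subtracting the term of index `e` with this `m` lowers the degree and keeps integrality, which gives
existence by induction. Uniqueness follows by comparing top coefficients. -/

theorem taylor_coeff_of_natDegree_le_succ {R : Type*} [CommSemiring R] {p : R[X]} {k : ℕ}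
    (hp : p.natDegree ≤ k + 1) (r : R) :
    (taylor r p).coeff k = p.coeff k + (k + 1) * p.coeff (k + 1) * r := by
  have hq : (hasseDeriv k p).natDegree ≤ 1 := (natDegree_hasseDeriv_le p k).trans (by omega)
  rw [taylor_coeff, eq_X_add_C_of_natDegree_le_one hq]
  simp only [eval_add, eval_mul, eval_C, eval_X, hasseDeriv_coeff, zero_add, Nat.choose_self,
    Nat.cast_one, one_mul, add_comm 1 k, Nat.choose_succ_self_right]
  push_cast
  ring

section IntValued

variable {R : Type*} [CommRing R]

def IsIntValued (f : R → R) : Prop := ∀ n : ℤ, ∃ z : ℤ, f n = z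

theorem IsIntValued.sub {f g : R → R} (hf : IsIntValued f) (hg : IsIntValued g) :
    IsIntValued (fun x ↦ f x - g x) := fun n ↦ by
  obtain ⟨a, ha⟩ := hf n
  obtain ⟨b, hb⟩ := hg n
  exact ⟨a - b, by simp [ha, hb]⟩

theorem IsIntValued.fwdDiff_iter {f : R → R} (hf : IsIntValued f) (k : ℕ) :
    IsIntValued ((fwdDiff 1)^[k] f) := by
  induction k with
  | zero => exact hf
  | succ k ih =>
    rw [Function.iterate_succ_apply']
    intro n
    obtain ⟨a, ha⟩ := ih (n + 1)
    obtain ⟨b, hb⟩ := ih n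
    exact ⟨a - b, by simp [fwdDiff, ← ha, ← hb]⟩

theorem IsIntValued.exists_factorial_mul_coeff_eq {P : R[X]} (hP : IsIntValued P.eval) {e : ℕ}
    (he : P.natDegree ≤ e) : ∃ z : ℤ, (e.factorial : R) * P.coeff e = z := by
  rcases he.lt_or_eq with he | rfl
  · exact ⟨0, by simp [coeff_eq_zero_of_natDegree_lt he]⟩
  · obtain ⟨z, hz⟩ := hP.fwdDiff_iter P.natDegree 0
    refine ⟨z, ?_⟩
    rw [← hz, P.fwdDiff_iter_degree_eq_factorial]
    simp [mul_comm]

end IntValued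

theorem natDegree_binomPoly (j : ℕ) : (binomPoly j).natDegree = j := by
  rw [binomPoly, natDegree_C_mul (by positivity), descPochhammer_natDegree]

theorem coeff_binomPoly_self (j : ℕ) : (binomPoly j).coeff j = (j.factorial : ℚ)⁻¹ := by
  have hmonic := (monic_descPochhammer ℚ j).leadingCoeff
  rw [leadingCoeff, descPochhammer_natDegree] at hmonic
  rw [binomPoly, coeff_C_mul, hmonic, mul_one]

theorem eval_intCast_binomPoly (j : ℕ) (z : ℤ) :
    (binomPoly j).eval (z : ℚ) = (Ring.choose z j : ℤ) := by
  have hfac : (j.factorial : ℚ) ≠ 0 := by positivity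
  rw [binomPoly, eval_mul, eval_C, ← descPochhammer_eval_cast, eval_eq_smeval,
    Ring.descPochhammer_eq_factorial_smul_choose, inv_mul_eq_iff_eq_mul₀ hfac,
    nsmul_eq_mul, Int.cast_mul, Int.cast_natCast]

noncomputable def macaulayTerm (i : ℕ) (m : ℤ) : ℚ[X] :=
  (binomPoly (i + 1)).comp (X + C (i : ℚ)) -
    (binomPoly (i + 1)).comp (X + C (i : ℚ) - C (m : ℚ))

theorem coeff_macaulayTerm {i k : ℕ} (m : ℤ) (hk : i ≤ k) :
    (macaulayTerm i m).coeff k = (k + 1) * (binomPoly (i + 1)).coeff (k + 1) * m := by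
  have hp : (binomPoly (i + 1)).natDegree ≤ k + 1 := by rw [natDegree_binomPoly]; omega
  rw [macaulayTerm, sub_eq_add_neg (X + C _), ← C_neg, add_assoc, ← C_add, ← taylor_apply,
    ← taylor_apply, coeff_sub, taylor_coeff_of_natDegree_le_succ hp,
    taylor_coeff_of_natDegree_le_succ hp]
  ring

theorem coeff_macaulayTerm_self (i : ℕ) (m : ℤ) :
    (macaulayTerm i m).coeff i = m / i.factorial := by
  rw [coeff_macaulayTerm m le_rfl, coeff_binomPoly_self, Nat.factorial_succ]
  push_cast
  field_simp

theorem natDegree_macaulayTerm_le (i : ℕ) (m : ℤ) : (macaulayTerm i m).natDegree ≤ i :=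
  natDegree_le_iff_coeff_eq_zero.mpr fun k hk ↦ by
    rw [coeff_macaulayTerm m hk.le,
      coeff_eq_zero_of_natDegree_lt (p := binomPoly _) (by rw [natDegree_binomPoly]; omega)]
    ring

theorem isIntValued_eval_macaulayTerm (i : ℕ) (m : ℤ) : IsIntValued (macaulayTerm i m).eval :=
  fun n ↦ ⟨Ring.choose (n + i) (i + 1) - Ring.choose (n + i - m) (i + 1), by
    simp only [macaulayTerm, eval_sub, eval_comp, eval_add, eval_X, eval_C]
    push_cast [← eval_intCast_binomPoly]
    rfl⟩

noncomputable def macaulaySum {e : ℕ} (m : Fin e → ℤ) : ℚ[X] :=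
  ∑ i : Fin e, macaulayTerm i (m i)

theorem macaulaySum_succ {e : ℕ} (m : Fin (e + 1) → ℤ) :
    macaulaySum m = macaulaySum (fun i ↦ m i.castSucc) + macaulayTerm e (m (Fin.last e)) := by
  rw [macaulaySum, Fin.sum_univ_castSucc]
  rfl

theorem degree_macaulaySum_lt {e : ℕ} (m : Fin e → ℤ) : (macaulaySum m).degree < e := by
  refine (degree_sum_le _ _).trans_lt <|
    (Finset.sup_lt_iff (WithBot.bot_lt_coe e)).mpr fun i _ ↦ ?_
  exact (degree_le_of_natDegree_le (natDegree_macaulayTerm_le i (m i))).trans_lt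
    (WithBot.coe_lt_coe.mpr i.isLt)

theorem coeff_macaulaySum_succ {e : ℕ} (m : Fin (e + 1) → ℤ) :
    (macaulaySum m).coeff e = m (Fin.last e) / e.factorial := by
  rw [macaulaySum_succ, coeff_add, coeff_eq_zero_of_degree_lt (degree_macaulaySum_lt _), zero_add,
    coeff_macaulayTerm_self]

theorem macaulaySum_injective (e : ℕ) :
    Function.Injective (macaulaySum : (Fin e → ℤ) → ℚ[X]) := by
  induction e with
  | zero => exact fun _ _ _ ↦ Subsingleton.elim _ _
  | succ e ih =>
    intro m m' h
    have hlast : m (Fin.last e) = m' (Fin.last e) := by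
      have hcoeff := congrArg (coeff · e) h
      simp only [coeff_macaulaySum_succ] at hcoeff
      exact_mod_cast (div_left_inj' (by positivity)).mp hcoeff
    have hinit : (fun i : Fin e ↦ m i.castSucc) = fun i ↦ m' i.castSucc := by
      apply ih
      rwa [macaulaySum_succ, macaulaySum_succ, hlast, add_left_inj] at h
    ext i
    induction i using Fin.lastCases with
    | last => exact hlast
    | cast j => exact congrFun hinit j

theorem exists_macaulaySum_eq {e : ℕ} {g : ℚ[X]} (hg : g.degree < e)
    (hint : IsIntValued g.eval) :
    ∃ m : Fin e → ℤ, macaulaySum m = g := by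
  induction e generalizing g with
  | zero =>
    have : g = 0 := by simpa using hg
    exact ⟨Fin.elim0, by simp [macaulaySum, this]⟩
  | succ e ih =>
    obtain ⟨z, hz⟩ :=
      hint.exists_factorial_mul_coeff_eq (natDegree_le_of_degree_le (Order.le_of_lt_succ hg))
    have hlower : (g - macaulayTerm e z).degree < e := by
      rw [degree_lt_iff_coeff_zero]
      intro k hk
      rw [coeff_sub]
      rcases hk.eq_or_lt with rfl | hk
      · rw [coeff_macaulayTerm_self, ← hz]
        field_simp
        ring
      · rw [coeff_eq_zero_of_degree_lt (hg.trans_le (by exact_mod_cast hk)),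
          coeff_eq_zero_of_natDegree_lt ((natDegree_macaulayTerm_le _ _).trans_lt hk), sub_zero]
    obtain ⟨m, hm⟩ := ih hlower <| by
      simpa only [eval_sub] using hint.sub (isIntValued_eval_macaulayTerm e z)
    refine ⟨Fin.snoc m z, ?_⟩
    simp only [macaulaySum_succ, Fin.snoc_castSucc, Fin.snoc_last, hm, sub_add_cancel]

theorem sign_patterns_stmt10_general (f : Polynomial ℚ) (d : ℕ)
    (hdeg : f.natDegree = d) (hint : ∀ n : ℤ, ∃ z : ℤ, f.eval (n : ℚ) = (z : ℚ)) :
    ∃! m : Fin (d + 1) → ℤ,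
      f = ∑ i : Fin (d + 1),
        ((binomPoly ((i : ℕ) + 1)).comp (Polynomial.X + Polynomial.C ((i : ℕ) : ℚ))
          - (binomPoly ((i : ℕ) + 1)).comp
              (Polynomial.X + Polynomial.C ((i : ℕ) : ℚ) - Polynomial.C ((m i : ℚ)))) := by
  have hdeg_lt : f.degree < ↑(d + 1) :=
    degree_le_natDegree.trans_lt (by exact_mod_cast hdeg.trans_lt d.lt_succ_self)
  obtain ⟨m, hm⟩ := exists_macaulaySum_eq hdeg_lt hint
  exact ⟨m, hm.symm, fun m' hm' ↦ macaulaySum_injective _ (hm'.symm.trans hm.symm)⟩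

theorem sign_patterns_stmt10 (f : Polynomial ℚ) (d : ℕ) (hf : f ≠ 0)
    (hdeg : f.natDegree = d) (hint : ∀ n : ℤ, ∃ z : ℤ, f.eval (n : ℚ) = (z : ℚ)) :
    ∃! m : Fin (d + 1) → ℤ,
      f = ∑ i : Fin (d + 1),
        ((binomPoly ((i : ℕ) + 1)).comp (Polynomial.X + Polynomial.C ((i : ℕ) : ℚ))
          - (binomPoly ((i : ℕ) + 1)).comp
              (Polynomial.X + Polynomial.C ((i : ℕ) : ℚ) - Polynomial.C ((m i : ℚ)))) :=
  sign_patterns_stmt10_general f d hdeg hint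
end

section
/- If f(x), g(x) ∈ ℚ[x] are two Hilbert polynomials, then their product f(x)·g(x) is a Hilbert polynomial. -/
open Polynomial

/-!
The two algebras may live over different fields, so instead of forming their Segre product
`⊕ₙ Rₙ ⊗ R'ₙ` directly we pass through combinatorics of monomials. If `x₁, …, xₙ` is a basis
of `R₁`, the exponents `u` for which `xᵘ` is not a combination of lex-smaller monomials of the
same degree form an order ideal `S ⊆ ℕⁿ` (lex order is compatible with multiplication), and those
of degree `d` index a basis of `R_d`. Conversely, an order ideal `V` of a monoid generated in
degree one with finite fibres of the degree gives the standard graded `ℚ`-algebra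
`ℚ[M] / (m ∉ V)` whose Hilbert function counts the elements of `V` of each degree. Finally, for
order ideals `S` and `T` the pairs in `S × T` of equal degrees form an order ideal in the Segre
monoid `{(a, b) | deg a = deg b}` with `#S_d · #T_d` elements in degree `d`.
-/

open Submodule Set

section LinearAlgebra

variable {K W ι κ : Type*} [DivisionRing K] [AddCommGroup W] [Module K W]

theorem LinearIndepOn.finrank_span_image {v : ι → W} {s : Set ι} (hv : LinearIndepOn K v s)
    (hs : s.Finite) : Module.finrank K (span K (v '' s)) = s.ncard := by
  have := hs.fintype
  rw [image_eq_range, finrank_span_eq_card hv, ncard_eq_toFinset_card', toFinset_card]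

theorem LinearIndepOn.isInternal_span_fiber [DecidableEq κ] {v : ι → W} {s : Set ι}
    (hv : LinearIndepOn K v s) (hspan : span K (v '' s) = ⊤) (f : ι → κ) :
    DirectSum.IsInternal fun k => span K (v '' {i ∈ s | f i = k}) := by
  have hsup (p : κ → Prop) : ⨆ (k) (_ : p k), span K (v '' {i ∈ s | f i = k}) =
      span K (v '' {i ∈ s | p (f i)}) := by
    simp_rw [← span_iUnion, ← image_iUnion]
    congr 2
    ext i
    simp
  rw [DirectSum.isInternal_submodule_iff_iSupIndep_and_iSup_eq_top, iSupIndep_def]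
  refine ⟨fun k => ?_, ?_⟩
  · rw [hsup (· ≠ k)]
    have hdisj : Disjoint {i ∈ s | f i = k} {i ∈ s | f i ≠ k} :=
      disjoint_left.mpr fun _ h h' => h'.2 h.2
    exact ((linearIndepOn_union_iff hdisj).mp
      (hv.mono (union_subset (fun _ h => h.1) fun _ h => h.1))).2.2
  · simpa using (hsup fun _ => True).trans (by simpa using hspan)

variable [LinearOrder κ]

variable (K) in
def greedyIndices (o : ι → κ) (v : ι → W) (s : Set ι) : Set ι :=
  {i ∈ s | v i ∉ span K (v '' {j ∈ s | o j < o i})}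

theorem mem_greedyIndices_insert {o : ι → κ} {v : ι → W} {s : Set ι} {a i : ι}
    (ha : ∀ j ∈ s, o j < o a) :
    i ∈ greedyIndices K o v (insert a s) ↔
      i ∈ greedyIndices K o v s ∨ i = a ∧ v a ∉ span K (v '' s) := by
  have has : a ∉ s := fun h => lt_irrefl _ (ha a h)
  by_cases hi : i = a
  · subst hi
    have hbelow : {j ∈ insert i s | o j < o i} = s := by
      ext j
      constructor
      · rintro ⟨rfl | hj, hlt⟩
        exacts [absurd hlt (lt_irrefl _), hj]
      · exact fun hj => ⟨mem_insert_of_mem i hj, ha j hj⟩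
    simp only [greedyIndices, mem_ofPred_eq, hbelow]
    simp [has]
  · by_cases his : i ∈ s
    · have hbelow : {j ∈ insert a s | o j < o i} = {j ∈ s | o j < o i} := by
        ext j
        constructor
        · rintro ⟨rfl | hj, hlt⟩
          exacts [absurd (hlt.trans (ha i his)) (lt_irrefl _), ⟨hj, hlt⟩]
        · exact fun ⟨hj, hlt⟩ => ⟨mem_insert_of_mem a hj, hlt⟩
      simp only [greedyIndices, mem_ofPred_eq, hbelow]
      simp [hi, his]
    · simp [greedyIndices, hi, his]

theorem linearIndepOn_greedyIndices_and_span_eq {o : ι → κ} (ho : Function.Injective o)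
    (v : ι → W) (s : Finset ι) :
    LinearIndepOn K v (greedyIndices K o v s) ∧
      span K (v '' greedyIndices K o v s) = span K (v '' s) := by
  classical
  induction s using Finset.induction_on_max_value o with
  | empty => simp [greedyIndices]
  | insert a s has hmax ih =>
    obtain ⟨hli, hspan⟩ := ih
    have hlt (j : ι) (hj : j ∈ (s : Set ι)) : o j < o a :=
      (hmax j hj).lt_of_ne (ho.ne (ne_of_mem_of_not_mem hj has))
    have hnot : a ∉ greedyIndices K o v s := fun h => has h.1
    rw [Finset.coe_insert, image_insert_eq]
    by_cases h : v a ∈ span K (v '' s)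
    · have hgreedy : greedyIndices K o v (insert a s) = greedyIndices K o v s := by
        ext i
        simp [mem_greedyIndices_insert hlt, h]
      rw [hgreedy, span_insert_eq_span h]
      exact ⟨hli, hspan⟩
    · have hgreedy : greedyIndices K o v (insert a s) = insert a (greedyIndices K o v s) := by
        ext i
        simp [mem_greedyIndices_insert hlt, h, or_comm]
      rw [hgreedy, image_insert_eq, span_insert, span_insert, hspan]
      exact ⟨(linearIndepOn_insert hnot).mpr ⟨hli, hspan ▸ h⟩, rfl⟩

theorem finrank_span_eq_ncard_greedyIndices {o : ι → κ} (ho : Function.Injective o) (v : ι → W)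
    {s : Set ι} (hs : s.Finite) :
    Module.finrank K (span K (v '' s)) = (greedyIndices K o v s).ncard := by
  obtain ⟨t, rfl⟩ := hs.exists_finset_coe
  obtain ⟨hli, hspan⟩ := linearIndepOn_greedyIndices_and_span_eq (K := K) ho v t
  rw [← hspan, hli.finrank_span_image (t.finite_toSet.subset (sep_subset _ _))]

end LinearAlgebra

theorem GradedAlgebra.grade_eq_span_of_span_eq_top {ι R A κ : Type*} [DecidableEq κ] [AddMonoid κ]
    [CommSemiring R] [Semiring A] [Algebra R A] (𝒜 : κ → Submodule R A) [GradedAlgebra 𝒜]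
    {g : ι → A} {deg : ι → κ} (hg : ∀ i, g i ∈ 𝒜 (deg i)) (hspan : span R (range g) = ⊤)
    (d : κ) : 𝒜 d = span R (g '' {i | deg i = d}) := by
  refine le_antisymm (fun a ha => ?_) (span_le.mpr ?_)
  · have ha' : proj 𝒜 d a ∈ (span R (range g)).map (proj 𝒜 d) := mem_map_of_mem (hspan ▸ mem_top)
    rw [map_span, proj_apply, DirectSum.decompose_of_mem_same 𝒜 ha] at ha'
    refine span_le.mpr ?_ ha'
    rintro - ⟨-, ⟨i, rfl⟩, rfl⟩
    rw [SetLike.mem_coe, proj_apply]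
    by_cases hi : deg i = d
    · rw [DirectSum.decompose_of_mem_same 𝒜 (hi ▸ hg i)]
      exact subset_span ⟨i, hi, rfl⟩
    · rw [DirectSum.decompose_of_mem_ne 𝒜 (hg i) hi]
      exact zero_mem _
  · rintro - ⟨i, rfl, rfl⟩
    exact hg i

def IsOrderIdeal {M : Type*} [Add M] (V : Set M) : Prop :=
  ∀ a b, a + b ∈ V → b ∈ V

structure IsStandardGrading {M : Type*} [AddCommMonoid M] (deg : M →+ ℕ) : Prop where
  exists_eq_add : ∀ m, m ≠ 0 → ∃ a b, deg a = 1 ∧ m = a + b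
  finite_fiber : ∀ d, {m | deg m = d}.Finite

theorem IsStandardGrading.eq_zero_of_deg_eq_zero {M : Type*} [AddCommMonoid M] {deg : M →+ ℕ}
    (h : IsStandardGrading deg) {m : M} (hm : deg m = 0) : m = 0 := by
  by_contra hne
  obtain ⟨a, b, ha, rfl⟩ := h.exists_eq_add m hne
  rw [map_add, ha] at hm
  omega

theorem Finsupp.isStandardGrading_degree {σ : Type*} [Finite σ] :
    IsStandardGrading (Finsupp.degree : (σ →₀ ℕ) →+ ℕ) where
  exists_eq_add u hu := by
    obtain ⟨i, hi⟩ := Finsupp.ne_iff.mp hu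
    have hle : Finsupp.single i 1 ≤ u := Finsupp.single_le_iff.mpr (Nat.one_le_iff_ne_zero.mpr hi)
    exact ⟨_, _, Finsupp.degree_single i 1, (add_tsub_cancel_of_le hle).symm⟩
  finite_fiber := Finsupp.finite_of_degree_eq

section StandardMonomials

variable (k : Type*) {R σ : Type*} [Field k] [CommRing R] [Algebra k R] (x : σ → R)

def evalMonomial (u : σ →₀ ℕ) : R := u.prod fun i e => x i ^ e

theorem evalMonomial_add (u w : σ →₀ ℕ) :
    evalMonomial x (u + w) = evalMonomial x u * evalMonomial x w :=
  Finsupp.prod_add_index' (fun i => pow_zero (x i)) fun i => pow_add (x i)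

theorem evalMonomial_mem_graded (𝒜 : ℕ → Submodule k R) [GradedAlgebra 𝒜] (hx : ∀ i, x i ∈ 𝒜 1)
    (u : σ →₀ ℕ) : evalMonomial x u ∈ 𝒜 u.degree := by
  simpa [evalMonomial, Finsupp.prod, Finsupp.degree_apply] using
    SetLike.prod_pow_mem_graded 𝒜 (fun _ => 1) x u (F := u.support) fun i _ => hx i

theorem span_range_evalMonomial (hx : Algebra.adjoin k (range x) = ⊤) :
    span k (range (evalMonomial x)) = ⊤ := by
  have hrange : range (evalMonomial x) = Submonoid.closure (range x) := by
    ext r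
    simp [Submonoid.mem_closure_range_iff, evalMonomial, eq_comm]
  rw [hrange, ← Algebra.adjoin_eq_span, hx, Algebra.top_toSubmodule]

variable [LinearOrder σ]

def standardMonomials : Set (σ →₀ ℕ) :=
  {u | u ∈ greedyIndices k toLex (evalMonomial x) {w | w.degree = u.degree}}

theorem isOrderIdeal_standardMonomials : IsOrderIdeal (standardMonomials k x) := by
  intro a b hab
  by_contra hb
  refine hab.2 ?_
  have hb' : evalMonomial x b ∈
      span k (evalMonomial x '' {w | w.degree = b.degree ∧ toLex w < toLex b}) := by
    simpa [standardMonomials, greedyIndices] using hb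
  have := mem_map_of_mem (f := LinearMap.mulLeft k (evalMonomial x a)) hb'
  rw [map_span, LinearMap.mulLeft_apply, ← evalMonomial_add] at this
  refine span_mono ?_ this
  rintro - ⟨-, ⟨w, ⟨hw, hlt⟩, rfl⟩, rfl⟩
  have hdeg : (a + w).degree = (a + b).degree := by rw [map_add, map_add, hw]
  refine ⟨a + w, ⟨hdeg, add_lt_add_right hlt (toLex a)⟩, ?_⟩
  rw [LinearMap.mulLeft_apply, evalMonomial_add]

theorem ncard_standardMonomials [Finite σ] (𝒜 : ℕ → Submodule k R) [GradedAlgebra 𝒜]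
    (hx₁ : ∀ i, x i ∈ 𝒜 1) (hx : Algebra.adjoin k (range x) = ⊤) (d : ℕ) :
    {u ∈ standardMonomials k x | u.degree = d}.ncard = Module.finrank k (𝒜 d) := by
  have hslice : {u ∈ standardMonomials k x | u.degree = d} =
      greedyIndices k toLex (evalMonomial x) {w | w.degree = d} := by
    ext u
    constructor
    · rintro ⟨hu, rfl⟩
      exact hu
    · rintro ⟨rfl, hu⟩
      exact ⟨⟨rfl, hu⟩, rfl⟩
  rw [hslice, ← finrank_span_eq_ncard_greedyIndices toLex.injective _
    (Finsupp.finite_of_degree_eq d), ← GradedAlgebra.grade_eq_span_of_span_eq_top 𝒜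
    (evalMonomial_mem_graded k x 𝒜 hx₁) (span_range_evalMonomial k x hx)]

end StandardMonomials

theorem IsHilbertPolynomial.exists_isOrderIdeal {f : ℚ[X]} (hf : IsHilbertPolynomial f) :
    ∃ (n : ℕ) (S : Set (Fin n →₀ ℕ)), IsOrderIdeal S ∧
      ∃ N, ∀ d ≥ N, ({u ∈ S | u.degree = d}.ncard : ℚ) = f.eval (d : ℚ) := by
  obtain ⟨k, R, _, _, _, 𝒜, _, hfin, hadj, N, hN⟩ := hf
  let b := Module.finBasis k (𝒜 1)
  have hspan : span k (range fun i => (b i : R)) = 𝒜 1 := by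
    have := congrArg (map (𝒜 1).subtype) b.span_eq
    rwa [map_span, map_subtype_top, ← range_comp] at this
  have hx : Algebra.adjoin k (range fun i => (b i : R)) = ⊤ := by
    rw [← Algebra.adjoin_span, hspan, hadj]
  refine ⟨_, standardMonomials k fun i => (b i : R), isOrderIdeal_standardMonomials k _, N,
    fun d hd => ?_⟩
  rw [ncard_standardMonomials k _ 𝒜 (fun i => (b i).2) hx d, hN d hd]

noncomputable section

open AddMonoidAlgebra

def monomialIdeal (K : Type*) [Field K] {M : Type*} [AddCommMonoid M] (V : Set M) : Ideal K[M] :=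
  Ideal.span (of' K M '' Vᶜ)

abbrev MonomialAlgebra (K : Type*) [Field K] {M : Type*} [AddCommMonoid M] (V : Set M) :=
  K[M] ⧸ monomialIdeal K V

theorem coeff_eq_zero_of_mem_monomialIdeal {K M : Type*} [Field K] [AddCommMonoid M] {V : Set M}
    (hV : IsOrderIdeal V) {x : K[M]} (hx : x ∈ monomialIdeal K V) {m : M} (hm : m ∈ V) :
    x.coeff m = 0 := by
  by_contra h
  obtain ⟨m', hm', d, rfl⟩ := mem_ideal_span_of'_image.mp hx m (Finsupp.mem_support_iff.mpr h)
  exact hm' (hV d m' hm)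

namespace MonomialAlgebra

variable {K : Type*} [Field K] {M : Type*} [AddCommMonoid M] {V : Set M}

variable (V) in
def mon (m : M) : MonomialAlgebra K V := Ideal.Quotient.mk _ (of' K M m)

theorem mon_add (a b : M) : (mon V (a + b) : MonomialAlgebra K V) = mon V a * mon V b := by
  simp [mon, ← map_mul, single_mul_single]

theorem mon_zero : (mon V 0 : MonomialAlgebra K V) = 1 := by
  simp [mon, ← one_def]

theorem mon_eq_zero {m : M} (hm : m ∉ V) : (mon V m : MonomialAlgebra K V) = 0 :=
  Ideal.Quotient.eq_zero_iff_mem.mpr (Ideal.subset_span ⟨m, hm, rfl⟩)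

variable (K V) in
def restrict (hV : IsOrderIdeal V) : MonomialAlgebra K V →ₗ[K] V →₀ K :=
  ((monomialIdeal K V).restrictScalars K).liftQ
    (Finsupp.lsubtypeDomain V ∘ₗ (coeffLinearEquiv K).toLinearMap)
    (fun x hx => LinearMap.mem_ker.mpr <| by
      ext ⟨m, hm⟩
      exact coeff_eq_zero_of_mem_monomialIdeal hV hx hm) ∘ₗ
  (Submodule.Quotient.restrictScalarsEquiv K (monomialIdeal K V)).symm.toLinearMap

theorem restrict_mon (hV : IsOrderIdeal V) (v : V) :
    restrict K V hV (mon V v) = Finsupp.single v 1 := by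
  classical
  ext w
  simp only [restrict, mon, of'_apply, LinearMap.comp_apply, LinearEquiv.coe_coe,
    ← Ideal.Quotient.mk_eq_mk, Submodule.Quotient.restrictScalarsEquiv_symm_mk]
  rw [Submodule.liftQ_apply]
  simp [Finsupp.lsubtypeDomain_apply, Finsupp.single_apply, Subtype.ext_iff]

theorem linearIndepOn_mon (hV : IsOrderIdeal V) : LinearIndepOn K (mon (K := K) V) V :=
  LinearIndependent.of_comp (restrict K V hV) <| by
    convert Finsupp.linearIndependent_single_one K V with v
    exact restrict_mon hV v

theorem span_mon : span K (mon V '' V) = (⊤ : Submodule K (MonomialAlgebra K V)) := by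
  have hrange : span K (range (mon V : M → MonomialAlgebra K V)) = ⊤ := by
    have := congrArg (map (Ideal.Quotient.mkₐ K (monomialIdeal K V)).toLinearMap)
      (AddMonoidAlgebra.basis M K).span_eq
    rwa [map_span, ← range_comp, Submodule.map_top, LinearMap.range_eq_top.mpr
      (Ideal.Quotient.mkₐ_surjective K _)] at this
  refine eq_top_iff.mpr (hrange ▸ span_le.mpr ?_)
  rintro - ⟨m, rfl⟩
  by_cases hm : m ∈ V
  · exact subset_span ⟨m, hm, rfl⟩
  · rw [mon_eq_zero hm]
    exact zero_mem _

variable (V) in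
def grading (deg : M →+ ℕ) (d : ℕ) : Submodule K (MonomialAlgebra K V) :=
  span K (mon V '' {m ∈ V | deg m = d})

variable (deg : M →+ ℕ)

theorem mon_mem_grading (m : M) : (mon V m : MonomialAlgebra K V) ∈ grading V deg (deg m) := by
  by_cases hm : m ∈ V
  · exact subset_span ⟨m, ⟨hm, rfl⟩, rfl⟩
  · rw [mon_eq_zero hm]
    exact zero_mem _

instance gradedMonoid : SetLike.GradedMonoid (grading (K := K) V deg) where
  one_mem := by simpa [mon_zero] using mon_mem_grading (K := K) (V := V) deg 0
  mul_mem {i j a b} ha hb := by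
    have : grading V deg i * grading V deg j ≤ grading (K := K) V deg (i + j) := by
      rw [grading, grading, span_mul_span, span_le]
      rintro - ⟨-, ⟨m, ⟨-, rfl⟩, rfl⟩, -, ⟨m', ⟨-, rfl⟩, rfl⟩, rfl⟩
      dsimp only
      rw [← mon_add, ← map_add]
      exact mon_mem_grading deg _
    exact this (mul_mem_mul ha hb)

theorem isInternal_grading (hV : IsOrderIdeal V) :
    DirectSum.IsInternal (grading (K := K) V deg) :=
  (linearIndepOn_mon hV).isInternal_span_fiber span_mon deg

abbrev gradedAlgebra (hV : IsOrderIdeal V) : GradedAlgebra (grading (K := K) V deg) :=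
  { gradedMonoid deg, (isInternal_grading deg hV).chooseDecomposition with }

theorem finrank_grading (hV : IsOrderIdeal V) {d : ℕ} (hfin : {m ∈ V | deg m = d}.Finite) :
    Module.finrank K (grading (K := K) V deg d) = {m ∈ V | deg m = d}.ncard :=
  ((linearIndepOn_mon hV).mono (sep_subset _ _)).finrank_span_image hfin

theorem adjoin_grading_one (hgen : ∀ m : M, m ≠ 0 → ∃ a b, deg a = 1 ∧ m = a + b) :
    Algebra.adjoin K (grading (K := K) V deg 1 : Set (MonomialAlgebra K V)) = ⊤ := by
  have hmon (m : M) :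
      mon V m ∈ Algebra.adjoin K (grading (K := K) V deg 1 : Set (MonomialAlgebra K V)) := by
    induction h : deg m using Nat.strong_induction_on generalizing m with
    | _ n ih =>
      by_cases hm : m = 0
      · rw [hm, mon_zero]
        exact one_mem _
      obtain ⟨a, b, ha, rfl⟩ := hgen m hm
      rw [mon_add]
      refine mul_mem (Algebra.subset_adjoin (ha ▸ mon_mem_grading deg a)) (ih (deg b) ?_ b rfl)
      rw [← h, map_add, ha]
      omega
  refine eq_top_iff.mpr fun w _ => ?_
  have hw : w ∈ span K (mon V '' V) := by rw [span_mon]; exact mem_top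
  refine span_le (p := Subalgebra.toSubmodule (Algebra.adjoin K _)).mpr ?_ hw
  rintro - ⟨m, -, rfl⟩
  exact hmon m

end MonomialAlgebra

end

theorem IsOrderIdeal.isHilbertPolynomial {M : Type} [AddCommMonoid M] {deg : M →+ ℕ}
    (hdeg : IsStandardGrading deg) {V : Set M} (hV : IsOrderIdeal V) {f : ℚ[X]} {N : ℕ}
    (hf : ∀ d ≥ N, ({m ∈ V | deg m = d}.ncard : ℚ) = f.eval (d : ℚ)) :
    IsHilbertPolynomial f := by
  have hfin (d : ℕ) : {m ∈ V | deg m = d}.Finite :=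
    (hdeg.finite_fiber d).subset (sep_subset_ofPred _ _)
  refine ⟨ℚ, MonomialAlgebra ℚ V, _, _, _, MonomialAlgebra.grading V deg,
    MonomialAlgebra.gradedAlgebra deg hV,
    fun d => FiniteDimensional.span_of_finite ℚ ((hfin d).image _),
    MonomialAlgebra.adjoin_grading_one deg hdeg.exists_eq_add, N, fun d hd => ?_⟩
  rw [MonomialAlgebra.finrank_grading deg hV (hfin d), hf d hd]

section Segre

variable {M₁ M₂ : Type*} [AddCommMonoid M₁] [AddCommMonoid M₂] (deg₁ : M₁ →+ ℕ) (deg₂ : M₂ →+ ℕ)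

def segre : AddSubmonoid (M₁ × M₂) :=
  AddMonoidHom.eqLocusM (deg₁.comp (AddMonoidHom.fst M₁ M₂)) (deg₂.comp (AddMonoidHom.snd M₁ M₂))

def segreDeg : segre deg₁ deg₂ →+ ℕ :=
  (deg₁.comp (AddMonoidHom.fst M₁ M₂)).comp (segre deg₁ deg₂).subtype

theorem mem_segre {p : M₁ × M₂} : p ∈ segre deg₁ deg₂ ↔ deg₁ p.1 = deg₂ p.2 := Iff.rfl

variable {deg₁ deg₂}

theorem IsStandardGrading.segre (h₁ : IsStandardGrading deg₁) (h₂ : IsStandardGrading deg₂) :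
    IsStandardGrading (segreDeg deg₁ deg₂) where
  exists_eq_add := by
    rintro ⟨⟨m₁, m₂⟩, hm⟩ hne
    have hm : deg₁ m₁ = deg₂ m₂ := hm
    have hm₁ : m₁ ≠ 0 := fun h => hne <| Subtype.ext <|
      Prod.ext h (h₂.eq_zero_of_deg_eq_zero (by rw [← hm, h, map_zero]))
    have hm₂ : m₂ ≠ 0 := fun h => hne <| Subtype.ext <|
      Prod.ext (h₁.eq_zero_of_deg_eq_zero (by rw [hm, h, map_zero])) h
    obtain ⟨a₁, b₁, ha₁, rfl⟩ := h₁.exists_eq_add m₁ hm₁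
    obtain ⟨a₂, b₂, ha₂, rfl⟩ := h₂.exists_eq_add m₂ hm₂
    rw [map_add, map_add, ha₁, ha₂] at hm
    exact ⟨⟨(a₁, a₂), ha₁.trans ha₂.symm⟩, ⟨(b₁, b₂), add_left_cancel hm⟩, ha₁, rfl⟩
  finite_fiber d := by
    refine (((h₁.finite_fiber d).prod (h₂.finite_fiber d)).preimage
      Subtype.val_injective.injOn).subset ?_
    rintro ⟨⟨m₁, m₂⟩, hm : deg₁ m₁ = deg₂ m₂⟩ (hd : deg₁ m₁ = d)
    exact ⟨hd, hm.symm.trans hd⟩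

theorem IsOrderIdeal.segre {V₁ : Set M₁} {V₂ : Set M₂} (h₁ : IsOrderIdeal V₁)
    (h₂ : IsOrderIdeal V₂) :
    IsOrderIdeal (Subtype.val ⁻¹' (V₁ ×ˢ V₂) : Set (segre deg₁ deg₂)) :=
  fun _ _ hab => ⟨h₁ _ _ hab.1, h₂ _ _ hab.2⟩

theorem ncard_segre_fiber (V₁ : Set M₁) (V₂ : Set M₂) (d : ℕ) :
    {p ∈ (Subtype.val ⁻¹' (V₁ ×ˢ V₂) : Set (segre deg₁ deg₂)) | segreDeg deg₁ deg₂ p = d}.ncard =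
      {m ∈ V₁ | deg₁ m = d}.ncard * {m ∈ V₂ | deg₂ m = d}.ncard := by
  rw [← ncard_prod, ← ncard_image_of_injective _ Subtype.val_injective]
  congr 1
  ext ⟨m₁, m₂⟩
  simp only [mem_image, mem_sep_iff, mem_preimage, mem_prod, Subtype.exists, exists_and_right,
    exists_eq_right, mem_segre]
  constructor
  · rintro ⟨hm, ⟨h₁, h₂⟩, hd : deg₁ m₁ = d⟩
    exact ⟨⟨h₁, hd⟩, h₂, hm.symm.trans hd⟩
  · rintro ⟨⟨h₁, hd⟩, h₂, hd'⟩
    exact ⟨hd.trans hd'.symm, ⟨h₁, h₂⟩, hd⟩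

end Segre

theorem sign_patterns_stmt13 (f g : Polynomial ℚ)
    (hf : IsHilbertPolynomial f) (hg : IsHilbertPolynomial g) :
    IsHilbertPolynomial (f * g) := by
  obtain ⟨n₁, S, hS, N₁, hSf⟩ := hf.exists_isOrderIdeal
  obtain ⟨n₂, T, hT, N₂, hTg⟩ := hg.exists_isOrderIdeal
  refine (hS.segre hT).isHilbertPolynomial
    (Finsupp.isStandardGrading_degree.segre Finsupp.isStandardGrading_degree)
    (N := max N₁ N₂) fun d hd => ?_
  rw [ncard_segre_fiber, Nat.cast_mul, hSf d (le_of_max_le_left hd),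
    hTg d (le_of_max_le_right hd), eval_mul]
end

section
/- If f(x) ∈ ℚ[x] is a Hilbert polynomial and t is a positive integer, then t·f(x) is a Hilbert polynomial. -/
open Polynomial

set_option maxHeartbeats 1000000
set_option synthInstance.maxHeartbeats 400000

noncomputable section FiberConstruction

open DirectSum

variable {k R : Type} [Field k] [CommRing R] [Algebra k R]
  (𝒜 : ℕ → Submodule k R) [GradedAlgebra 𝒜] (t : ℕ)

lemma proj0_mul (a b : R) :
    GradedAlgebra.proj 𝒜 0 (a * b) = GradedAlgebra.proj 𝒜 0 a * GradedAlgebra.proj 𝒜 0 b := by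
  simpa only [GradedRing.projZeroRingHom_apply, GradedAlgebra.proj_apply]
    using map_mul (GradedRing.projZeroRingHom 𝒜) a b

lemma proj0_of_mem {x : R} {i : ℕ} (hi : i ≠ 0) (hx : x ∈ 𝒜 i) :
    GradedAlgebra.proj 𝒜 0 x = 0 := by
  rw [GradedAlgebra.proj_apply, decompose_of_mem_ne 𝒜 hx hi]

lemma proj0_one : GradedAlgebra.proj 𝒜 0 (1 : R) = 1 := by
  rw [GradedAlgebra.proj_apply, decompose_of_mem_same 𝒜 (SetLike.one_mem_graded 𝒜)]

lemma proj0_of_mem_zero {x : R} (hx : x ∈ 𝒜 0) :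
    GradedAlgebra.proj 𝒜 0 x = x := by
  rw [GradedAlgebra.proj_apply, decompose_of_mem_same 𝒜 hx]

/-- The fiber product of `t` copies of `R` over the degree-zero part. -/
def fiberAlgebra : Subalgebra k (Fin t → R) where
  carrier := {v | ∀ j j' : Fin t,
    GradedAlgebra.proj 𝒜 0 (v j) = GradedAlgebra.proj 𝒜 0 (v j')}
  mul_mem' {a b} ha hb j j' := by
    simp only [Pi.mul_apply, proj0_mul, ha j j', hb j j']
  one_mem' := fun j j' => rfl
  add_mem' {a b} ha hb j j' := by
    simp only [Pi.add_apply, map_add, ha j j', hb j j']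
  zero_mem' := fun j j' => rfl
  algebraMap_mem' r := fun j j' => rfl

/-- The grading on the fiber product. -/
def fiberGrading (i : ℕ) : Submodule k (fiberAlgebra 𝒜 t) where
  carrier := {v | ∀ j, (v : Fin t → R) j ∈ 𝒜 i}
  add_mem' {a b} ha hb j := (𝒜 i).add_mem (ha j) (hb j)
  zero_mem' := fun j => (𝒜 i).zero_mem
  smul_mem' := fun c v hv j => (𝒜 i).smul_mem c (hv j)

instance : SetLike.GradedMonoid (fiberGrading 𝒜 t) where
  one_mem := fun j => SetLike.one_mem_graded 𝒜
  mul_mem := fun {i i'} {a b} ha hb j => SetLike.mul_mem_graded (ha j) (hb j)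

lemma fiber_iSup_eq_top : ⨆ i, fiberGrading 𝒜 t i = ⊤ := by
  classical
  rw [Submodule.eq_top_iff']
  intro v
  set N : ℕ :=
    (Finset.univ.sup fun j : Fin t =>
      (DFinsupp.support (decompose 𝒜 ((v : Fin t → R) j))).sup id) + 1 with hN
  have hw : ∀ i : ℕ, (fun j : Fin t => (decompose 𝒜 ((v : Fin t → R) j) i : R)) ∈
      fiberAlgebra 𝒜 t := by
    intro i j j'
    rcases eq_or_ne i 0 with rfl | hi
    · rw [proj0_of_mem_zero 𝒜 (SetLike.coe_mem _), proj0_of_mem_zero 𝒜 (SetLike.coe_mem _)]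
      exact v.2 j j'
    · rw [proj0_of_mem 𝒜 hi (SetLike.coe_mem _), proj0_of_mem 𝒜 hi (SetLike.coe_mem _)]
  set w : ℕ → fiberAlgebra 𝒜 t := fun i => ⟨_, hw i⟩ with hwdef
  have hv : v = ∑ i ∈ Finset.range N, w i := by
    apply Subtype.ext
    funext j
    have hcoe : ((∑ i ∈ Finset.range N, w i : fiberAlgebra 𝒜 t) : Fin t → R) =
        ∑ i ∈ Finset.range N, ((w i : fiberAlgebra 𝒜 t) : Fin t → R) := by
      simp
    rw [hcoe, Finset.sum_apply]
    have hsupp : (DFinsupp.support (decompose 𝒜 ((v : Fin t → R) j))) ⊆ Finset.range N := by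
      intro i hi
      rw [Finset.mem_range, hN]
      have h1 : i ≤ (DFinsupp.support (decompose 𝒜 ((v : Fin t → R) j))).sup id :=
        Finset.le_sup (f := id) hi
      have h2 : (DFinsupp.support (decompose 𝒜 ((v : Fin t → R) j))).sup id ≤
          Finset.univ.sup fun j : Fin t =>
            (DFinsupp.support (decompose 𝒜 ((v : Fin t → R) j))).sup id :=
        Finset.le_sup (f := fun j : Fin t =>
          (DFinsupp.support (decompose 𝒜 ((v : Fin t → R) j))).sup id) (Finset.mem_univ j)
      omega
    have hwj : ∀ i : ℕ, ((w i : fiberAlgebra 𝒜 t) : Fin t → R) j =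
        (decompose 𝒜 ((v : Fin t → R) j) i : R) := fun i => rfl
    simp only [hwj]
    have := DirectSum.sum_support_decompose 𝒜 ((v : Fin t → R) j)
    conv_lhs => rw [← this]
    exact (Finset.sum_subset (f := fun i => ((decompose 𝒜 ((v : Fin t → R) j) i : R)))
      hsupp (by
        intro i _ hi
        rw [DFinsupp.notMem_support_iff] at hi
        simp [hi]))
  rw [hv]
  exact Submodule.sum_mem _ fun i _ =>
    Submodule.mem_iSup_of_mem i (fun j => SetLike.coe_mem _)

lemma fiber_iSupIndep : iSupIndep (fiberGrading 𝒜 t) := by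
  intro i
  rw [Submodule.disjoint_def]
  intro x hxi hxsup
  have hA : iSupIndep 𝒜 := (DirectSum.Decomposition.isInternal 𝒜).submodule_iSupIndep
  apply Subtype.ext
  funext j
  have h1 : (x : Fin t → R) j ∈ 𝒜 i := hxi j
  have h2 : (x : Fin t → R) j ∈ ⨆ (l) (_ : l ≠ i), 𝒜 l := by
    let ev : fiberAlgebra 𝒜 t →ₗ[k] R :=
      (LinearMap.proj j).comp (fiberAlgebra 𝒜 t).val.toLinearMap
    have hle : (⨆ (l) (_ : l ≠ i), fiberGrading 𝒜 t l) ≤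
        Submodule.comap ev (⨆ (l) (_ : l ≠ i), 𝒜 l) := by
      refine iSup₂_le fun l hl => ?_
      refine le_trans ?_ (Submodule.comap_mono (le_iSup₂ (f := fun l _ => 𝒜 l) l hl))
      intro y hy
      exact hy j
    exact hle hxsup
  have := Submodule.disjoint_def.mp (hA i) _ h1 h2
  simpa using this

/-- The graded algebra structure on the fiber product. -/
def fiberGraded : GradedAlgebra (fiberGrading 𝒜 t) :=
  { toDecomposition :=
      (DirectSum.isInternal_submodule_of_iSupIndep_of_iSup_eq_top
        (fiber_iSupIndep 𝒜 t) (fiber_iSup_eq_top 𝒜 t)).chooseDecomposition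
    toGradedMonoid := inferInstance }

/-- Comparison map with the product of the graded pieces. -/
def fiberPiMap (i : ℕ) : fiberGrading 𝒜 t i →ₗ[k] (Fin t → 𝒜 i) where
  toFun x := fun j => ⟨((x : fiberAlgebra 𝒜 t) : Fin t → R) j, x.2 j⟩
  map_add' := fun _ _ => rfl
  map_smul' := fun _ _ => rfl

lemma fiberPiMap_injective (i : ℕ) : Function.Injective (fiberPiMap 𝒜 t i) := by
  intro x y h
  apply Subtype.ext
  apply Subtype.ext
  funext j
  exact congrArg Subtype.val (congrFun h j)

lemma fiberPiMap_surjective {i : ℕ} (hi : i ≠ 0) :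
    Function.Surjective (fiberPiMap 𝒜 t i) := by
  intro u
  refine ⟨⟨⟨fun j => (u j : R), fun j j' => by
    rw [proj0_of_mem 𝒜 hi (u j).2, proj0_of_mem 𝒜 hi (u j').2]⟩,
    fun j => (u j).2⟩, ?_⟩
  funext j
  rfl

lemma fiber_fd (hfd : ∀ i, FiniteDimensional k (𝒜 i)) (i : ℕ) :
    FiniteDimensional k (fiberGrading 𝒜 t i) := by
  haveI := hfd i
  exact FiniteDimensional.of_injective (fiberPiMap 𝒜 t i) (fiberPiMap_injective 𝒜 t i)

lemma fiber_finrank {i : ℕ} (hi : i ≠ 0) [FiniteDimensional k (𝒜 i)] :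
    Module.finrank k (fiberGrading 𝒜 t i) = t * Module.finrank k (𝒜 i) := by
  have e := LinearEquiv.ofBijective (fiberPiMap 𝒜 t i)
    ⟨fiberPiMap_injective 𝒜 t i, fiberPiMap_surjective 𝒜 t hi⟩
  rw [e.finrank_eq, Module.finrank_pi_fintype, Finset.sum_const, Finset.card_univ,
    Fintype.card_fin, smul_eq_mul]

/-- The set of tuples of degree-one elements. -/
def TSet : Set (Fin t → R) := {v | ∀ j, v j ∈ 𝒜 1}

lemma key (y : R) (hy : y ∈ Submonoid.closure ((𝒜 1 : Submodule k R) : Set R)) :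
    y ∈ Submodule.span k ({1} : Set R) ∨
      (GradedAlgebra.proj 𝒜 0 y = 0 ∧
        ∀ j : Fin t, Pi.single j y ∈ Algebra.adjoin k (TSet 𝒜 t)) := by
  classical
  induction hy using Submonoid.closure_induction with
  | mem x hx =>
      right
      refine ⟨proj0_of_mem 𝒜 one_ne_zero hx, fun j => Algebra.subset_adjoin fun l => ?_⟩
      rcases eq_or_ne l j with rfl | h
      · rw [Pi.single_eq_same]; exact hx
      · rw [Pi.single_eq_of_ne h]; exact (𝒜 1).zero_mem
  | one => exact Or.inl (Submodule.mem_span_singleton_self 1)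
  | mul a b ha hb iha ihb =>
      rcases iha with ha1 | ⟨ha0, haS⟩
      · rcases ihb with hb1 | ⟨hb0, hbS⟩
        · left
          obtain ⟨d, hd⟩ := Submodule.mem_span_singleton.mp hb1
          rw [← hd, mul_smul_comm, mul_one]
          exact Submodule.smul_mem _ d ha1
        · right
          obtain ⟨c, hc⟩ := Submodule.mem_span_singleton.mp ha1
          constructor
          · rw [← hc, smul_mul_assoc, one_mul, map_smul, hb0, smul_zero]
          · intro j
            rw [← hc, smul_mul_assoc, one_mul, Pi.single_smul]
            exact Subalgebra.smul_mem _ (hbS j) c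
      · rcases ihb with hb1 | ⟨hb0, hbS⟩
        · right
          obtain ⟨d, hd⟩ := Submodule.mem_span_singleton.mp hb1
          constructor
          · rw [← hd, mul_smul_comm, mul_one, map_smul, ha0, smul_zero]
          · intro j
            rw [← hd, mul_smul_comm, mul_one, Pi.single_smul]
            exact Subalgebra.smul_mem _ (haS j) d
        · right
          constructor
          · rw [proj0_mul, ha0, zero_mul]
          · intro j
            rw [Pi.single_mul]
            exact mul_mem (haS j) (hbS j)

lemma mem_span_closure (hgen : Algebra.adjoin k ((𝒜 1 : Submodule k R) : Set R) = ⊤)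
    (a : R) : a ∈ Submodule.span k
      ((Submonoid.closure ((𝒜 1 : Submodule k R) : Set R) : Submonoid R) : Set R) := by
  have : a ∈ Subalgebra.toSubmodule (Algebra.adjoin k ((𝒜 1 : Submodule k R) : Set R)) := by
    rw [hgen]
    exact trivial
  rwa [Algebra.adjoin_eq_span] at this

lemma gradeZero_le_span_one (hgen : Algebra.adjoin k ((𝒜 1 : Submodule k R) : Set R) = ⊤) :
    𝒜 0 ≤ Submodule.span k ({1} : Set R) := by
  intro a ha
  have hmem := mem_span_closure 𝒜 hgen a
  have hproj : GradedAlgebra.proj 𝒜 0 a = a := proj0_of_mem_zero 𝒜 ha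
  rw [← hproj]
  have h1 : GradedAlgebra.proj 𝒜 0 a ∈ Submodule.map (GradedAlgebra.proj 𝒜 0)
      (Submodule.span k
        ((Submonoid.closure ((𝒜 1 : Submodule k R) : Set R) : Submonoid R) : Set R)) :=
    Submodule.mem_map_of_mem hmem
  rw [Submodule.map_span] at h1
  refine Submodule.span_le.mpr ?_ h1
  rintro _ ⟨y, hy, rfl⟩
  rcases key 𝒜 1 y hy with h | ⟨h0, _⟩
  · obtain ⟨c, hc⟩ := Submodule.mem_span_singleton.mp h
    rw [← hc, map_smul, proj0_one]
    exact Submodule.smul_mem _ _ (Submodule.mem_span_singleton_self 1)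
  · rw [h0]
    exact Submodule.zero_mem _

lemma fiber_adjoin (ht : 0 < t)
    (hgen : Algebra.adjoin k ((𝒜 1 : Submodule k R) : Set R) = ⊤) :
    Algebra.adjoin k
      ((fiberGrading 𝒜 t 1 : Submodule k (fiberAlgebra 𝒜 t)) : Set (fiberAlgebra 𝒜 t)) = ⊤ := by
  classical
  apply Subalgebra.map_injective (f := (fiberAlgebra 𝒜 t).val) Subtype.val_injective
  rw [AlgHom.map_adjoin, Algebra.map_top, Subalgebra.range_val]
  have himg : (fiberAlgebra 𝒜 t).val ''
      ((fiberGrading 𝒜 t 1 : Submodule k (fiberAlgebra 𝒜 t)) : Set (fiberAlgebra 𝒜 t)) =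
      TSet 𝒜 t := by
    ext v
    constructor
    · rintro ⟨x, hx, rfl⟩
      exact hx
    · intro hv
      exact ⟨⟨v, fun j j' => by
        rw [proj0_of_mem 𝒜 one_ne_zero (hv j), proj0_of_mem 𝒜 one_ne_zero (hv j')]⟩, hv, rfl⟩
  rw [himg]
  apply le_antisymm
  · rw [Algebra.adjoin_le_iff]
    intro v hv j j'
    rw [proj0_of_mem 𝒜 one_ne_zero (hv j), proj0_of_mem 𝒜 one_ne_zero (hv j')]
  · rintro v hv
    set j0 : Fin t := ⟨0, ht⟩ with hj0
    have ha0 : GradedAlgebra.proj 𝒜 0 (v j0) ∈ 𝒜 0 := by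
      rw [GradedAlgebra.proj_apply]
      exact SetLike.coe_mem _
    obtain ⟨c, hc⟩ := Submodule.mem_span_singleton.mp (gradeZero_le_span_one 𝒜 hgen ha0)
    have hveq : v = (algebraMap k (Fin t → R) c) +
        ∑ j : Fin t, Pi.single j (v j - GradedAlgebra.proj 𝒜 0 (v j)) := by
      funext l
      rw [Pi.add_apply, Finset.sum_apply]
      have hsum : ∑ j : Fin t, Pi.single j (v j - GradedAlgebra.proj 𝒜 0 (v j)) l =
          v l - GradedAlgebra.proj 𝒜 0 (v l) := by
        rw [Finset.sum_pi_single]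
        simp
      rw [hsum]
      have halg : (algebraMap k (Fin t → R) c) l = algebraMap k R c := rfl
      rw [halg, Algebra.algebraMap_eq_smul_one, hc, hv j0 l]
      ring
    rw [hveq]
    refine add_mem (Subalgebra.algebraMap_mem _ c) (Subalgebra.sum_mem _ fun j _ => ?_)
    let Λ : R →ₗ[k] (Fin t → R) :=
      (LinearMap.single k (fun _ : Fin t => R) j).comp
        (LinearMap.id - GradedAlgebra.proj 𝒜 0)
    have hΛ : Λ (v j) = Pi.single j (v j - GradedAlgebra.proj 𝒜 0 (v j)) := rfl
    rw [← hΛ]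
    have h1 : Λ (v j) ∈ Submodule.map Λ (Submodule.span k
        ((Submonoid.closure ((𝒜 1 : Submodule k R) : Set R) : Submonoid R) : Set R)) :=
      Submodule.mem_map_of_mem (mem_span_closure 𝒜 hgen (v j))
    rw [Submodule.map_span] at h1
    rw [← Subalgebra.mem_toSubmodule]
    refine Submodule.span_le.mpr ?_ h1
    rintro _ ⟨y, hy, rfl⟩
    rcases key 𝒜 t y hy with h | ⟨h0, hs⟩
    · obtain ⟨c', hc'⟩ := Submodule.mem_span_singleton.mp h
      have hz : Λ y = 0 := by
        have : Λ y = Pi.single j (y - GradedAlgebra.proj 𝒜 0 y) := rfl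
        rw [this, ← hc', map_smul, proj0_one, sub_self, Pi.single_zero]
      rw [hz]
      exact Submodule.zero_mem _
    · have hz : Λ y = Pi.single j y := by
        have : Λ y = Pi.single j (y - GradedAlgebra.proj 𝒜 0 y) := rfl
        rw [this, h0, sub_zero]
      rw [hz]
      exact (Subalgebra.mem_toSubmodule _).mpr (hs j)

end FiberConstruction

theorem sign_patterns_stmt14 (f : Polynomial ℚ) (hf : IsHilbertPolynomial f)
    (t : ℕ) (ht : 0 < t) :
    IsHilbertPolynomial (Polynomial.C (t : ℚ) * f) := by
  obtain ⟨k, R, instk, instR, instA, 𝒜, instG, hfd, hgen, N₀, hN⟩ := hf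
  letI := instk
  letI := instR
  letI := instA
  letI := instG
  refine ⟨k, fiberAlgebra 𝒜 t, instk, inferInstance, inferInstance, fiberGrading 𝒜 t,
    fiberGraded 𝒜 t, fiber_fd 𝒜 t hfd, fiber_adjoin 𝒜 t ht hgen, max N₀ 1, fun i hi => ?_⟩
  have h1 : i ≠ 0 := by
    have := le_trans (le_max_right N₀ 1) hi
    omega
  have hN' : N₀ ≤ i := le_trans (le_max_left N₀ 1) hi
  haveI := hfd i
  rw [fiber_finrank 𝒜 t h1, eval_mul, eval_C, ← hN i hN']
  push_cast
  ring
end
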